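/- In the 5×4 game with rows a,b,c,d,e, columns A,B,C,D, row payoffs u₁(a,B)=12, u₁(b,C)=12, u₁(c,A)=12, u₁(d,·)=5 on A,B,C, u₁(e,·)=7 on A,B,C, u₁(e,D)=1, all other u₁ zero; column payoffs u₂(a,C)=u₂(b,A)=u₂(c,B)=u₂(d,D)=u₂(e,D)=1, all other u₂ zero; and SIS partition {{a,b,c,d},{e}}, every uncorrelated profile with no undetectable beneficial deviations gives the row player expected utility at most 1. -/

import Mathlib

open Finset

/-- Row payoffs of the 5×4 signaling example (rows a,b,c,d,e; columns A,B,C,D). -/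
def sgU1 : Fin 5 → Fin 4 → ℝ :=
  ![![0, 12, 0, 0], ![0, 0, 12, 0], ![12, 0, 0, 0], ![5, 5, 5, 0], ![7, 7, 7, 1]]

/-- Column payoffs of the 5×4 signaling example. -/
def sgU2 : Fin 5 → Fin 4 → ℝ :=
  ![![0, 0, 1, 0], ![1, 0, 0, 0], ![0, 1, 0, 0], ![0, 0, 0, 1], ![0, 0, 0, 1]]

/-- SIS labeling: {a,b,c,d} is one SIS and {e} is the other. -/
def sgSis : Fin 5 → Fin 2 := ![0, 0, 0, 0, 1]

/-!
Write `p, q, s` for the weights of columns `A, B, C`. A column in the support of `σ₂` is a best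
response, and the column payoffs sum to `1`, so the row that makes it pay (`b, c, a` for
`A, B, C`) carries positive weight. That row is then a best reply within the SIS `{a, b, c, d}`,
so the column that makes it pay (`C, A, B` respectively) has maximal weight among `A, B, C`.
Going around the cycle `A → C → B → A` gives `p = q = s`, and if this common weight were
positive, row `d` would earn `15 p > 12 p`. Hence `σ₂` sits on `D`, where no row earns more
than `1`.
-/

open Fin.NatCast in
theorem Fin.eq_of_forall_pos_le_add_one {α : Type*} [PartialOrder α] [Zero α] {n : ℕ}
    {v : Fin (n + 1) → α} (hv : ∀ i, 0 < v i → ∀ j, v j ≤ v (i + 1)) {i : Fin (n + 1)}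
    (hi : 0 < v i) (j : Fin (n + 1)) : v j = v i := by
  have hmax : ∀ k : ℕ, ∀ j, v j ≤ v (i + (k : Fin (n + 1)) + 1) := by
    intro k
    induction k with
    | zero => simpa using hv i hi
    | succ k ih => simpa [add_assoc] using hv _ (hi.trans_le (ih i))
  have hle : ∀ j j', v j ≤ v j' := fun j j' => by
    simpa [show i + (j' - i - 1) + 1 = j' by abel] using hmax (j' - i - 1).val j
  exact (hle j i).antisymm (hle i j)

theorem Finset.pos_of_sum_pos_of_forall_le {ι M : Type*} [AddCommMonoid M] [LinearOrder M]
    [AddLeftMono M] {s : Finset ι} {f : ι → M} (hsum : 0 < ∑ j ∈ s, f j) {i : ι}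
    (hi : ∀ j ∈ s, f j ≤ f i) : 0 < f i := by
  obtain ⟨j, hj, hpos⟩ := exists_lt_of_sum_lt (s := s) (f := 0) (g := f) (by simpa using hsum)
  exact hpos.trans_le (hi j hj)

namespace SignalingExample

def colPayoff (σ1 : Fin 5 → ℝ) (c : Fin 4) : ℝ := ∑ r, σ1 r * sgU2 r c

def rowPayoff (σ2 : Fin 4 → ℝ) (r : Fin 5) : ℝ := ∑ c, σ2 c * sgU1 r c

/- Columns `A, C, B` and rows `b, a, c`: column `cycleCol i` pays off against row `cycleRow i`,
which in turn pays off against column `cycleCol (i + 1)`. -/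
def cycleCol : Fin 3 → Fin 4 := ![0, 2, 1]

def cycleRow : Fin 3 → Fin 5 := ![1, 0, 2]

theorem sum_colPayoff (σ1 : Fin 5 → ℝ) : ∑ c, colPayoff σ1 c = ∑ r, σ1 r := by
  simp [colPayoff, sgU2, Fin.sum_univ_five, Fin.sum_univ_four, add_assoc, add_comm]

theorem colPayoff_cycleCol (σ1 : Fin 5 → ℝ) (i : Fin 3) :
    colPayoff σ1 (cycleCol i) = σ1 (cycleRow i) := by
  fin_cases i <;> simp [colPayoff, sgU2, cycleCol, cycleRow, Fin.sum_univ_five]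

theorem rowPayoff_cycleRow (σ2 : Fin 4 → ℝ) (i : Fin 3) :
    rowPayoff σ2 (cycleRow i) = 12 * σ2 (cycleCol (i + 1)) := by
  fin_cases i <;> simp [rowPayoff, sgU1, cycleCol, cycleRow, Fin.sum_univ_four, mul_comm]

theorem rowPayoff_three (σ2 : Fin 4 → ℝ) :
    rowPayoff σ2 3 = 5 * ∑ i, σ2 (cycleCol i) := by
  simp [rowPayoff, sgU1, cycleCol, Fin.sum_univ_four, Fin.sum_univ_three, mul_add, mul_comm,
    add_assoc, add_comm, add_left_comm]

theorem sgSis_cycleRow (i : Fin 3) : sgSis (cycleRow i) = sgSis 3 := by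
  fin_cases i <;> rfl

theorem rowPayoff_le_one {σ2 : Fin 4 → ℝ} (hσ2 : ∑ c, σ2 c = 1)
    (hABC : ∀ i, σ2 (cycleCol i) = 0) (r : Fin 5) : rowPayoff σ2 r ≤ 1 := by
  obtain ⟨hA, hC, hB⟩ : σ2 0 = 0 ∧ σ2 2 = 0 ∧ σ2 1 = 0 := ⟨hABC 0, hABC 1, hABC 2⟩
  have hD : σ2 3 = 1 := by simpa [Fin.sum_univ_four, hA, hB, hC] using hσ2
  fin_cases r <;> simp [rowPayoff, sgU1, Fin.sum_univ_four, hA, hB, hC, hD]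

variable {σ1 : Fin 5 → ℝ} {σ2 : Fin 4 → ℝ}

theorem cycleRow_pos (hσ1 : ∑ r, σ1 r = 1)
    (hcol : ∀ c, 0 < σ2 c → ∀ c', colPayoff σ1 c' ≤ colPayoff σ1 c) {i : Fin 3}
    (hi : 0 < σ2 (cycleCol i)) : 0 < σ1 (cycleRow i) := by
  rw [← colPayoff_cycleCol σ1 i]
  refine pos_of_sum_pos_of_forall_le (s := univ) ?_ fun c _ => hcol _ hi c
  rw [sum_colPayoff, hσ1]
  exact one_pos

theorem le_cycleCol_add_one
    (hrow : ∀ r, 0 < σ1 r → ∀ r', sgSis r' = sgSis r → rowPayoff σ2 r' ≤ rowPayoff σ2 r)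
    {i : Fin 3} (hi : 0 < σ1 (cycleRow i)) (j : Fin 3) :
    σ2 (cycleCol j) ≤ σ2 (cycleCol (i + 1)) := by
  have := hrow _ hi (cycleRow (j - 1)) (by rw [sgSis_cycleRow, sgSis_cycleRow])
  rw [rowPayoff_cycleRow, rowPayoff_cycleRow, sub_add_cancel] at this
  linarith

theorem cycleCol_eq_zero (hσ1 : ∑ r, σ1 r = 1) (hσ2 : ∀ c, 0 ≤ σ2 c)
    (hcol : ∀ c, 0 < σ2 c → ∀ c', colPayoff σ1 c' ≤ colPayoff σ1 c)
    (hrow : ∀ r, 0 < σ1 r → ∀ r', sgSis r' = sgSis r → rowPayoff σ2 r' ≤ rowPayoff σ2 r)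
    (i : Fin 3) : σ2 (cycleCol i) = 0 := by
  by_contra hne
  have hi : 0 < σ2 (cycleCol i) := (hσ2 _).lt_of_ne' hne
  have hconst := Fin.eq_of_forall_pos_le_add_one (v := fun k => σ2 (cycleCol k))
    (fun k hk => le_cycleCol_add_one hrow (cycleRow_pos hσ1 hcol hk)) hi
  have hd := hrow _ (cycleRow_pos hσ1 hcol hi) 3 (sgSis_cycleRow i).symm
  simp only [rowPayoff_three, rowPayoff_cycleRow, hconst, Fin.sum_univ_three] at hd
  linarith

end SignalingExample

open SignalingExample

/-- in the 5×4 signaling example, every uncorrelated profile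
with no undetectable beneficial deviations gives the row player expected
utility at most 1. -/
theorem signaling_example_SELO_upper_bound
    (σ1 : Fin 5 → ℝ) (σ2 : Fin 4 → ℝ)
    (hσ1 : (∀ r, 0 ≤ σ1 r) ∧ ∑ r, σ1 r = 1)
    (hσ2 : (∀ c, 0 ≤ σ2 c) ∧ ∑ c, σ2 c = 1)
    (hcol : ∀ c, 0 < σ2 c → ∀ c', ∑ r, σ1 r * sgU2 r c' ≤ ∑ r, σ1 r * sgU2 r c)
    (hrow : ∀ r, 0 < σ1 r → ∀ r', sgSis r' = sgSis r →
        ∑ c, σ2 c * sgU1 r' c ≤ ∑ c, σ2 c * sgU1 r c) :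
    ∑ r, ∑ c, σ1 r * σ2 c * sgU1 r c ≤ 1 := by
  have hABC := cycleCol_eq_zero hσ1.2 hσ2.1 hcol hrow
  calc ∑ r, ∑ c, σ1 r * σ2 c * sgU1 r c = ∑ r, σ1 r * rowPayoff σ2 r := by
        simp only [rowPayoff, mul_sum, mul_assoc]
    _ ≤ ∑ r, σ1 r * 1 := by
        gcongr with r
        exacts [hσ1.1 r, rowPayoff_le_one hσ2.2 hABC r]
    _ = 1 := by simpa using hσ1.2
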